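/- Fix positive integers t ≤ m ≤ n, let X be an m×n matrix of indeterminates over a field 𝔽 of prime characteristic p, and R = 𝔽[X] with homogeneous maximal ideal 𝔪. Let k be the least integer in [0, t−1] with (m−k)(n−k)/(t−k) ≤ (m−k−1)(n−k−1)/(t−k−1) (division by zero interpreted as infinity), and let Δ be defined from Δ_k, Δ_k' and u = t(m+n−2k) − mn + k² as in the construction below. Under the lexicographical term order with x_{11} > x_{12} > ⋯ > x_{1n} > x_{21} > ⋯ > x_{mn}, every variable x_{ij} occurs in the initial monomial of Δ with exponent at most t−k; consequently Δ ∉ 𝔪^{[t−k+1]}, where 𝔪^{[s]} = (x_{ij}^s : 1 ≤ i ≤ m, 1 ≤ j ≤ n). -/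

import Mathlib

open MvPolynomial

/-- The generic `m × n` matrix `X`, whose entries are the variables `x_{ij}` of the
polynomial ring `𝔽[X]`. -/
noncomputable def genMat (𝔽 : Type*) [Field 𝔽] (m n : ℕ) :
    Matrix (Fin m) (Fin n) (MvPolynomial (Fin m × Fin n) 𝔽) :=
  Matrix.of fun i j => MvPolynomial.X (i, j)

/-- `f` is a size `s` minor of the generic `m × n` matrix: the determinant of the submatrix
obtained by choosing `s` rows and `s` columns (in increasing order). -/
def IsMinor (𝔽 : Type*) [Field 𝔽] (m n s : ℕ) (f : MvPolynomial (Fin m × Fin n) 𝔽) : Prop :=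
  ∃ (row : Fin s → Fin m) (col : Fin s → Fin n), StrictMono row ∧ StrictMono col ∧
    f = ((genMat 𝔽 m n).submatrix row col).det

/-- `I_s ⊆ 𝔽[X]`, the ideal generated by the size `s` minors of the generic matrix. -/
noncomputable def minorsIdeal (𝔽 : Type*) [Field 𝔽] (m n s : ℕ) :
    Ideal (MvPolynomial (Fin m × Fin n) 𝔽) :=
  Ideal.span {f | IsMinor 𝔽 m n s f}

/-- The minor of the generic `m × n` matrix with the `s` consecutive rows
`r0+1, …, r0+s` and the `s` consecutive columns `c0+1, …, c0+s` (in `1`-based terms).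
Indices are clamped into range; in all uses below they are within range, so this is
exactly the minor `[r0+1,…,r0+s | c0+1,…,c0+s]`. -/
noncomputable def intervalMinor (𝔽 : Type*) [Field 𝔽] (m n : ℕ) (s r0 c0 : ℕ) :
    MvPolynomial (Fin m × Fin n) 𝔽 :=
  if h : 0 < m ∧ 0 < n then
    (Matrix.of fun i j : Fin s =>
      (MvPolynomial.X (⟨min (r0 + (i : ℕ)) (m - 1), by omega⟩,
        ⟨min (c0 + (j : ℕ)) (n - 1), by omega⟩) : MvPolynomial (Fin m × Fin n) 𝔽)).det
  else 0

/-- The element `Δ_k`, the product of the minors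
`[1,…,m | i,…,i+m-1]` for `i = 1, …, n-m+1`, and
`[j,…,m | 1,…,m-j+1]·[1,…,m-j+1 | n-m+j,…,n]` for `j = 2, …, m-k`. -/
noncomputable def Delta (𝔽 : Type*) [Field 𝔽] (m n k : ℕ) :
    MvPolynomial (Fin m × Fin n) 𝔽 :=
  (∏ i ∈ Finset.range (n - m + 1), intervalMinor 𝔽 m n m 0 i) *
    ∏ j ∈ Finset.Icc 2 (m - k),
      intervalMinor 𝔽 m n (m - j + 1) (j - 1) 0 *
        intervalMinor 𝔽 m n (m - j + 1) 0 (n - m + j - 1)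

/-- The element `Δ_k' = Δ_k · [m-k+1,…,m | 1,…,k]` (for `k ≥ 1`). -/
noncomputable def Delta' (𝔽 : Type*) [Field 𝔽] (m n k : ℕ) :
    MvPolynomial (Fin m × Fin n) 𝔽 :=
  Delta 𝔽 m n k * intervalMinor 𝔽 m n k (m - k) 0

/-- The integer `u = t(m+n-2k) - mn + k²`. -/
def uInt (t m n k : ℕ) : ℤ :=
  (t : ℤ) * ((m : ℤ) + (n : ℤ) - 2 * (k : ℤ)) - (m : ℤ) * (n : ℤ) + (k : ℤ) ^ 2

/-- The element `Δ`:  `Δ_0^t` if `k = 0`;  `Δ_k^u · (Δ_k')^{t-k-u}` if `k ≥ 1` and `u ≥ 0`;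
and `(Δ_k')^{t-k+u} · Δ_{k-1}^{-u}` if `k ≥ 1` and `u < 0`. -/
noncomputable def DeltaMain (𝔽 : Type*) [Field 𝔽] (m n t k : ℕ) :
    MvPolynomial (Fin m × Fin n) 𝔽 :=
  if k = 0 then Delta 𝔽 m n 0 ^ t
  else if 0 ≤ uInt t m n k then
    Delta 𝔽 m n k ^ (uInt t m n k).toNat *
      Delta' 𝔽 m n k ^ ((t : ℤ) - (k : ℤ) - uInt t m n k).toNat
  else
    Delta' 𝔽 m n k ^ ((t : ℤ) - (k : ℤ) + uInt t m n k).toNat *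
      Delta 𝔽 m n (k - 1) ^ (-uInt t m n k).toNat

/-- The condition `(m-k)(n-k)/(t-k) ≤ (m-k-1)(n-k-1)/(t-k-1)`, where a positive integer
divided by zero is interpreted as infinity: for `k = t-1` the right-hand side is infinite
and the condition holds automatically. -/
def minCond (t m n k : ℕ) : Prop :=
  k = t - 1 ∨
    (((m - k) * (n - k) : ℕ) : ℝ) / ((t - k : ℕ) : ℝ) ≤
      (((m - k - 1) * (n - k - 1) : ℕ) : ℝ) / ((t - k - 1 : ℕ) : ℝ)

/-- The variable `x_w` strictly precedes `x_v` in the ordering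
`x_{11} > x_{12} > ⋯ > x_{1n} > x_{21} > ⋯ > x_{mn}`, i.e. `x_w > x_v` as variables. -/
def varBefore {m n : ℕ} (w v : Fin m × Fin n) : Prop :=
  w.1 < v.1 ∨ (w.1 = v.1 ∧ w.2 < v.2)

/-- The exponent vector `d` is strictly smaller than `e` in the lexicographical term order
determined by `x_{11} > x_{12} > ⋯ > x_{mn}`: at the most significant variable where they
differ, `d` has the smaller exponent. -/
def monLT {m n : ℕ} (d e : (Fin m × Fin n) →₀ ℕ) : Prop :=
  ∃ v : Fin m × Fin n, (∀ w, varBefore w v → d w = e w) ∧ d v < e v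

/-!
In the lexicographic order the initial monomial of a minor of the generic matrix is the product
of its main diagonal, because any other permutation loses at the first index it moves. Each minor
occurring in `Δ_k` or `Δ_k'` is a maximal one along its diagonal, so its initial monomial is the
product of all variables on one line `j - i = c` of `X`; these lines are distinct and fill the
band `k - m < j - i < n - k` (resp. `k - m ≤ j - i < n - k`), so `in(Δ_k)`, `in(Δ_k')` and
`in(Δ_{k-1})` are squarefree. The minimality of `k` gives `k - t < u ≤ t - k`, which says exactly
that `Δ` is a product of `t - k` such factors; hence every exponent of `in(Δ)` is at most `t - k`,
and a polynomial with such a monomial in its support is not in `𝔪^[t-k+1]`.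
-/

open scoped MonomialOrder

/-- `MonomialOrder.lex` compares exponents at the least variable where they differ, so the
variables of `Fin m ×ₗ Fin n` are ranked `x₁₁ > x₁₂ > ⋯ > x_mn`. -/
noncomputable def lexOrder (m n : ℕ) : MonomialOrder (Fin m × Fin n) :=
  MonomialOrder.lex (σ := Fin m ×ₗ Fin n)

theorem lexOrder_lt_iff {m n : ℕ} {d e : (Fin m × Fin n) →₀ ℕ} :
    d ≺[lexOrder m n] e ↔ monLT d e :=
  (Finsupp.lex_def (α := Fin m ×ₗ Fin n) (r := (· < ·)) (s := (· < ·)) (a := d) (b := e)).trans <|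
    exists_congr fun v => and_congr_left' <| forall_congr' fun w => by
      show toLex (ofLex w) < toLex (ofLex v) → _ ↔ _
      rw [Prod.Lex.toLex_lt_toLex]; rfl

theorem MonomialOrder.degree_eq_of_forall_le {σ R : Type*} [CommSemiring R] (o : MonomialOrder σ)
    {f : MvPolynomial σ R} {D : σ →₀ ℕ} (hD : D ∈ f.support)
    (h : ∀ E ∈ f.support, E ≼[o] D) : o.degree f = D :=
  o.toSyn.injective <| le_antisymm (o.degree_le_iff.mpr h) (o.le_degree hD)

theorem MvPolynomial.notMem_span_X_pow {σ R : Type*} [CommSemiring R] {f : MvPolynomial σ R}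
    {D : σ →₀ ℕ} (hD : D ∈ f.support) {s : ℕ} (hs : ∀ v, D v < s) :
    f ∉ Ideal.span {g | ∃ v, g = X v ^ s} := by
  have : {g : MvPolynomial σ R | ∃ v, g = X v ^ s} =
      (fun d => monomial d 1) '' Set.range fun v => Finsupp.single v s := by
    ext g
    simp [X_pow_eq_monomial, eq_comm]
  rw [this, mem_ideal_span_monomial_image]
  intro h
  obtain ⟨_, ⟨v, rfl⟩, hle⟩ := h D hD
  exact lt_irrefl _ ((hs v).trans_le (by simpa using hle v))

section Minor

variable {𝔽 : Type*} [Field 𝔽] {m n s : ℕ} {row : Fin s → Fin m} {col : Fin s → Fin n}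

lemma not_varBefore_of_le {w v : Fin m × Fin n} (h1 : v.1 ≤ w.1) (h2 : v.2 ≤ w.2) :
    ¬ varBefore w v := by
  rintro (h | ⟨h, h'⟩)
  · exact h.not_ge h1
  · exact h'.not_ge h2

/-- The two exponents first differ at the diagonal entry of the first index moved by `τ`. -/
lemma sum_single_perm_lt_sum_single (hrow : StrictMono row) (hcol : StrictMono col)
    {τ : Equiv.Perm (Fin s)} (hτ : τ ≠ 1) :
    (∑ i, Finsupp.single (row (τ i), col i) 1) ≺[lexOrder m n]
      ∑ i, Finsupp.single (row i, col i) 1 := by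
  obtain ⟨j, hj⟩ : ∃ j, τ j ≠ j := by by_contra! h; exact hτ (Equiv.ext h)
  obtain ⟨i₀, hi₀ : τ i₀ ≠ i₀, hmin⟩ := WellFounded.has_min wellFounded_lt {i | τ i ≠ i} ⟨j, hj⟩
  have hfix : ∀ i < i₀, τ i = i := fun i hi => by_contra fun h => hmin i h hi
  have hge : ∀ i, i₀ ≤ i → i₀ ≤ τ i := fun i hi => by
    by_contra! h
    rw [τ.injective (hfix _ h)] at h
    exact h.not_ge hi
  rw [lexOrder_lt_iff]
  refine ⟨(row i₀, col i₀), fun w hw => ?_, ?_⟩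
  · simp only [Finsupp.finsetSum_apply, Finsupp.single_apply]
    refine Finset.sum_congr rfl fun i _ => ?_
    rcases lt_or_ge i i₀ with hi | hi
    · rw [hfix i hi]
    · rw [if_neg, if_neg] <;> rintro rfl <;> refine not_varBefore_of_le ?_ (hcol.monotone hi) hw
      exacts [hrow.monotone hi, hrow.monotone (hge i hi)]
  · simp only [Finsupp.finsetSum_apply, Finsupp.single_apply, Prod.mk.injEq,
      hrow.injective.eq_iff, hcol.injective.eq_iff]
    rw [Finset.sum_eq_zero fun i _ => if_neg fun ⟨h₁, h₂⟩ => hi₀ (h₂ ▸ h₁)]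
    simp

variable (𝔽) in
lemma det_submatrix_genMat (row : Fin s → Fin m) (col : Fin s → Fin n) :
    ((genMat 𝔽 m n).submatrix row col).det =
      ∑ τ : Equiv.Perm (Fin s),
        monomial (∑ i, Finsupp.single (row (τ i), col i) 1) (Equiv.Perm.sign τ : 𝔽) := by
  rw [Matrix.det_apply']
  refine Finset.sum_congr rfl fun τ _ => ?_
  simp only [Matrix.submatrix_apply, genMat, Matrix.of_apply, X, ← monomial_sum_one]
  rw [← map_intCast (C : 𝔽 →+* MvPolynomial (Fin m × Fin n) 𝔽), C_mul_monomial, mul_one]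

lemma coeff_diag_det_submatrix_genMat (hrow : StrictMono row) (hcol : StrictMono col) :
    coeff (∑ i, Finsupp.single (row i, col i) 1) ((genMat 𝔽 m n).submatrix row col).det = 1 := by
  rw [det_submatrix_genMat, coeff_sum, Finset.sum_eq_single 1]
  · simp
  · intro τ _ hτ
    rw [coeff_monomial,
      if_neg fun h => (sum_single_perm_lt_sum_single hrow hcol hτ).ne (congrArg _ h)]
  · simp

lemma degree_det_submatrix_genMat (hrow : StrictMono row) (hcol : StrictMono col) :
    (lexOrder m n).degree ((genMat 𝔽 m n).submatrix row col).det =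
      ∑ i, Finsupp.single (row i, col i) 1 := by
  refine MonomialOrder.degree_eq_of_forall_le _ (by
    rw [mem_support_iff, coeff_diag_det_submatrix_genMat hrow hcol]; exact one_ne_zero) ?_
  intro E hE
  rw [mem_support_iff, det_submatrix_genMat, coeff_sum] at hE
  obtain ⟨τ, -, hτ⟩ := Finset.exists_ne_zero_of_sum_ne_zero hE
  rw [coeff_monomial] at hτ
  obtain rfl : _ = E := by_contra fun h => hτ (if_neg h)
  rcases eq_or_ne τ 1 with rfl | hτ1
  · simp
  · exact (sum_single_perm_lt_sum_single hrow hcol hτ1).le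

lemma monic_det_submatrix_genMat (hrow : StrictMono row) (hcol : StrictMono col) :
    (lexOrder m n).Monic ((genMat 𝔽 m n).submatrix row col).det := by
  rw [MonomialOrder.Monic, MonomialOrder.leadingCoeff, degree_det_submatrix_genMat hrow hcol,
    coeff_diag_det_submatrix_genMat hrow hcol]

end Minor

section Band

variable {m n : ℕ}

noncomputable def diagonalBand (m n : ℕ) (a b : ℤ) : (Fin m × Fin n) →₀ ℕ :=
  Finsupp.equivFunOnFinite.symm fun v =>
    if a ≤ (v.2 : ℤ) - v.1 ∧ (v.2 : ℤ) - v.1 ≤ b then 1 else 0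

lemma diagonalBand_apply (a b : ℤ) (v : Fin m × Fin n) :
    diagonalBand m n a b v = if a ≤ (v.2 : ℤ) - v.1 ∧ (v.2 : ℤ) - v.1 ≤ b then 1 else 0 :=
  rfl

lemma diagonalBand_apply_le_one (a b : ℤ) (v : Fin m × Fin n) : diagonalBand m n a b v ≤ 1 := by
  rw [diagonalBand_apply]; split_ifs <;> omega

lemma diagonalBand_add_diagonalBand {a b b' c : ℤ} (hab : a ≤ b') (hb : b + 1 = b')
    (hbc : b ≤ c) : diagonalBand m n a b + diagonalBand m n b' c = diagonalBand m n a c := by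
  ext v
  simp only [Finsupp.add_apply, diagonalBand_apply]
  split_ifs <;> omega

lemma nsmul_diagonalBand_apply_le (a : ℕ) (c d : ℤ) (v : Fin m × Fin n) :
    (a • diagonalBand m n c d) v ≤ a := by
  rw [Finsupp.smul_apply, smul_eq_mul]
  exact mul_le_of_le_one_right (Nat.zero_le a) (diagonalBand_apply_le_one c d v)

lemma nsmul_add_nsmul_diagonalBand_apply_le (a b : ℕ) (c d c' d' : ℤ) (v : Fin m × Fin n) :
    (a • diagonalBand m n c d + b • diagonalBand m n c' d') v ≤ a + b :=
  add_le_add (nsmul_diagonalBand_apply_le a c d v) (nsmul_diagonalBand_apply_le b c' d' v)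

lemma sum_range_diagonalBand (N : ℕ) :
    ∑ i ∈ Finset.range (N + 1), diagonalBand m n i i = diagonalBand m n 0 N := by
  induction N with
  | zero => simp
  | succ N ih =>
    rw [Finset.sum_range_succ, ih, diagonalBand_add_diagonalBand] <;> omega

lemma diagonalBand_add_sum_Icc (b : ℤ) (hb : 0 ≤ b) {M : ℕ} (hM : 1 ≤ M) :
    diagonalBand m n 0 b + ∑ j ∈ Finset.Icc 2 M,
      (diagonalBand m n (1 - j) (1 - j) + diagonalBand m n (b + j - 1) (b + j - 1)) =
      diagonalBand m n (1 - M) (b + M - 1) := by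
  induction M, hM using Nat.le_induction with
  | base => simp
  | succ M hM ih =>
    rw [Finset.sum_Icc_succ_top (by omega), ← add_assoc, ih, ← add_assoc,
      add_comm (diagonalBand m n (1 - M) _),
      diagonalBand_add_diagonalBand (b' := 1 - M), diagonalBand_add_diagonalBand] <;> omega

end Band

section IntervalMinor

variable {𝔽 : Type*} [Field 𝔽] {m n s r₀ c₀ : ℕ}

lemma strictMono_fin_add (h : r₀ + s ≤ m) :
    StrictMono fun i : Fin s => (⟨r₀ + i, by omega⟩ : Fin m) :=
  fun i j (hij : i.val < j.val) => by simp [Fin.lt_def, hij]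

lemma intervalMinor_eq_det_submatrix (hm : 0 < m) (hn : 0 < n) (hr : r₀ + s ≤ m)
    (hc : c₀ + s ≤ n) :
    intervalMinor 𝔽 m n s r₀ c₀ = ((genMat 𝔽 m n).submatrix
      (fun i : Fin s => (⟨r₀ + i, by omega⟩ : Fin m))
      (fun j : Fin s => (⟨c₀ + j, by omega⟩ : Fin n))).det := by
  rw [intervalMinor, dif_pos ⟨hm, hn⟩]
  congr 2
  ext i j
  simp only [Matrix.of_apply, genMat]
  congr <;> omega

/-- A minor whose main diagonal runs from the top or left edge of the matrix to its bottom or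
right edge has, as diagonal, the whole line `j - i = c₀ - r₀`. -/
lemma sum_single_diag_eq_diagonalBand (hr : r₀ + s ≤ m) (hc : c₀ + s ≤ n)
    (hstart : r₀ = 0 ∨ c₀ = 0) (hend : r₀ + s = m ∨ c₀ + s = n) :
    ∑ i : Fin s, Finsupp.single ((⟨r₀ + i, by omega⟩ : Fin m), (⟨c₀ + i, by omega⟩ : Fin n)) 1 =
      diagonalBand m n (c₀ - r₀) (c₀ - r₀) := by
  ext ⟨a, b⟩
  simp only [Finsupp.finsetSum_apply, Finsupp.single_apply, diagonalBand_apply, Prod.mk.injEq,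
    Fin.ext_iff]
  split_ifs with h
  · rw [Finset.sum_eq_single ⟨a - r₀, by omega⟩ (fun i _ hi => if_neg fun h' => hi (by
      ext; simp only; omega)) (by simp)]
    rw [if_pos (by simp only; omega)]
  · exact Finset.sum_eq_zero fun i _ => if_neg fun h' => h (by omega)

lemma degree_intervalMinor (hm : 0 < m) (hn : 0 < n) (hr : r₀ + s ≤ m) (hc : c₀ + s ≤ n)
    (hstart : r₀ = 0 ∨ c₀ = 0) (hend : r₀ + s = m ∨ c₀ + s = n) {c : ℤ} (hoff : c₀ - r₀ = c) :
    (lexOrder m n).degree (intervalMinor 𝔽 m n s r₀ c₀) = diagonalBand m n c c := by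
  rw [← hoff, intervalMinor_eq_det_submatrix hm hn hr hc, degree_det_submatrix_genMat,
    sum_single_diag_eq_diagonalBand hr hc hstart hend]
  exacts [strictMono_fin_add hr, strictMono_fin_add hc]

lemma monic_intervalMinor (hm : 0 < m) (hn : 0 < n) (hr : r₀ + s ≤ m) (hc : c₀ + s ≤ n) :
    (lexOrder m n).Monic (intervalMinor 𝔽 m n s r₀ c₀) := by
  rw [intervalMinor_eq_det_submatrix hm hn hr hc]
  exact monic_det_submatrix_genMat (strictMono_fin_add hr) (strictMono_fin_add hc)

end IntervalMinor

section Delta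

variable {𝔽 : Type*} [Field 𝔽] {m n : ℕ}

lemma monic_Delta (hm : 0 < m) (hmn : m ≤ n) (k : ℕ) : (lexOrder m n).Monic (Delta 𝔽 m n k) := by
  have hn := hm.trans_le hmn
  refine (MonomialOrder.Monic.prod fun i hi => ?_).mul (MonomialOrder.Monic.prod fun j hj => ?_)
  · rw [Finset.mem_range] at hi
    exact monic_intervalMinor hm hn (by omega) (by omega)
  · rw [Finset.mem_Icc] at hj
    exact (monic_intervalMinor hm hn (by omega) (by omega)).mul
      (monic_intervalMinor hm hn (by omega) (by omega))

lemma monic_Delta' (hmn : m ≤ n) {k : ℕ} (hk : 0 < k) (hkm : k ≤ m) :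
    (lexOrder m n).Monic (Delta' 𝔽 m n k) :=
  (monic_Delta (by omega) hmn k).mul
    (monic_intervalMinor (by omega) (by omega) (by omega) (by omega))

lemma degree_Delta (hmn : m ≤ n) {k : ℕ} (hkm : k < m) :
    (lexOrder m n).degree (Delta 𝔽 m n k) = diagonalBand m n (k + 1 - m) (n - k - 1) := by
  have hm : 0 < m := by omega
  have hn : 0 < n := by omega
  have hne : ∀ {s r₀ c₀}, r₀ + s ≤ m → c₀ + s ≤ n → intervalMinor 𝔽 m n s r₀ c₀ ≠ 0 :=
    fun hr hc => (monic_intervalMinor hm hn hr hc).ne_zero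
  rw [Delta, MonomialOrder.degree_mul' (monic_Delta hm hmn k).ne_zero,
    MonomialOrder.degree_prod fun i hi => hne (by omega) (by have := Finset.mem_range.mp hi; omega),
    MonomialOrder.degree_prod fun j hj => by
      rw [Finset.mem_Icc] at hj
      exact mul_ne_zero (hne (by omega) (by omega)) (hne (by omega) (by omega))]
  have hfull : ∀ i ∈ Finset.range (n - m + 1),
      (lexOrder m n).degree (intervalMinor 𝔽 m n m 0 i) = diagonalBand m n i i := fun i hi => by
    rw [Finset.mem_range] at hi
    exact degree_intervalMinor hm hn (by omega) (by omega) (.inl rfl) (.inl (by omega)) (by simp)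
  have hpair : ∀ j ∈ Finset.Icc 2 (m - k),
      (lexOrder m n).degree (intervalMinor 𝔽 m n (m - j + 1) (j - 1) 0 *
        intervalMinor 𝔽 m n (m - j + 1) 0 (n - m + j - 1)) =
      diagonalBand m n (1 - j) (1 - j) +
        diagonalBand m n ((n - m : ℕ) + j - 1) ((n - m : ℕ) + j - 1) := fun j hj => by
    rw [Finset.mem_Icc] at hj
    rw [MonomialOrder.degree_mul (hne (by omega) (by omega)) (hne (by omega) (by omega)),
      degree_intervalMinor hm hn (by omega) (by omega) (.inr rfl) (.inl (by omega))
        (c := 1 - j) (by omega),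
      degree_intervalMinor hm hn (by omega) (by omega) (.inl rfl) (.inr (by omega))
        (c := (n - m : ℕ) + j - 1) (by omega)]
  rw [Finset.sum_congr rfl hfull, Finset.sum_congr rfl hpair, sum_range_diagonalBand]
  convert diagonalBand_add_sum_Icc (m := m) (n := n) (n - m : ℕ) (by omega) (M := m - k) (by omega)
    using 2 <;> omega

lemma degree_Delta' (hmn : m ≤ n) {k : ℕ} (hk : 0 < k) (hkm : k < m) :
    (lexOrder m n).degree (Delta' 𝔽 m n k) = diagonalBand m n (k - m) (n - k - 1) := by
  rw [Delta', MonomialOrder.degree_mul (monic_Delta (by omega) hmn k).ne_zero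
    (monic_intervalMinor (by omega) (by omega) (by omega) (by omega)).ne_zero, degree_Delta hmn hkm,
    degree_intervalMinor (by omega) (by omega) (by omega) (by omega) (.inr rfl) (.inl (by omega))
      (c := k - m) (by omega), add_comm, diagonalBand_add_diagonalBand] <;> omega

end Delta

section Exponents

variable {t m n k : ℕ}

lemma minCond_iff (hkt : k < t) (htm : t ≤ m) (htn : t ≤ n) :
    minCond t m n k ↔ uInt t m n k ≤ (t : ℤ) - k := by
  rcases eq_or_ne k (t - 1) with hk | hk
  · refine iff_of_true (.inl hk) ?_
    obtain rfl : t = k + 1 := by omega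
    rw [uInt]
    push_cast
    nlinarith [mul_nonneg (by omega : (0 : ℤ) ≤ m - k - 1) (by omega : (0 : ℤ) ≤ n - k - 1)]
  have hT : (0 : ℝ) < (t - k - 1 : ℕ) := by norm_cast; omega
  have hcond : minCond t m n k ↔
      (m - k) * (n - k) * (t - k - 1) ≤ (m - k - 1) * (n - k - 1) * (t - k) := by
    rw [minCond, or_iff_right hk, div_le_div_iff₀ (hT.trans (by norm_cast; omega)) hT]
    norm_cast
  rw [hcond]
  zify [hkt.le, show k ≤ m by omega, show k ≤ n by omega, show 1 ≤ t - k by omega,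
    show 1 ≤ m - k by omega, show 1 ≤ n - k by omega]
  have hdiff : ((m : ℤ) - k - 1) * (n - k - 1) * (t - k) - (m - k) * (n - k) * (t - k - 1) =
      (t - k) - uInt t m n k := by
    rw [uInt]; ring
  constructor <;> intro h <;> linarith

lemma uInt_pred (hk : 0 < k) : uInt t m n (k - 1) = uInt t m n k + 2 * ((t : ℤ) - k) + 1 := by
  rw [uInt, uInt, Nat.cast_pred hk]
  ring

end Exponents

section DeltaMain

variable {𝔽 : Type*} [Field 𝔽] {t m n k : ℕ}

lemma monic_DeltaMain (hmn : m ≤ n) (hkm : k < m) :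
    (lexOrder m n).Monic (DeltaMain 𝔽 m n t k) := by
  have hm : 0 < m := by omega
  unfold DeltaMain
  split_ifs with hk0
  · exact (monic_Delta hm hmn 0).pow
  · exact (monic_Delta hm hmn k).pow.mul (monic_Delta' hmn (by omega) hkm.le).pow
  · exact (monic_Delta' hmn (by omega) hkm.le).pow.mul (monic_Delta hm hmn _).pow

lemma degree_DeltaMain_apply_le (hkt : k < t) (htm : t ≤ m) (hmn : m ≤ n)
    (hle : uInt t m n k ≤ (t : ℤ) - k) (hgt : 0 < k → (k : ℤ) - t < uInt t m n k)
    (v : Fin m × Fin n) : (lexOrder m n).degree (DeltaMain 𝔽 m n t k) v ≤ t - k := by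
  have hkm : k < m := by omega
  have hne := (monic_DeltaMain (𝔽 := 𝔽) (t := t) hmn hkm).ne_zero
  unfold DeltaMain at hne ⊢
  split_ifs at hne ⊢ with hk0 hu
  · subst hk0
    rw [MonomialOrder.degree_pow, degree_Delta hmn hkm]
    exact nsmul_diagonalBand_apply_le t _ _ v
  · rw [MonomialOrder.degree_mul' hne, MonomialOrder.degree_pow, MonomialOrder.degree_pow,
      degree_Delta hmn hkm, degree_Delta' hmn (by omega) hkm]
    refine (nsmul_add_nsmul_diagonalBand_apply_le _ _ _ _ _ _ v).trans ?_
    omega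
  · rw [MonomialOrder.degree_mul' hne, MonomialOrder.degree_pow, MonomialOrder.degree_pow,
      degree_Delta hmn (by omega), degree_Delta' hmn (by omega) hkm]
    refine (nsmul_add_nsmul_diagonalBand_apply_le _ _ _ _ _ _ v).trans ?_
    have := hgt (by omega)
    omega

end DeltaMain

theorem Delta_not_mem_bracket_general
    (𝔽 : Type*) [Field 𝔽]
    (m n t : ℕ) (ht : 0 < t) (htm : t ≤ m) (hmn : m ≤ n)
    (k : ℕ) (hk : k ≤ t - 1) (hCk : minCond t m n k)
    (hleast : ∀ j : ℕ, j < k → ¬ minCond t m n j) :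
    (∃ D : (Fin m × Fin n) →₀ ℕ, D ∈ (DeltaMain 𝔽 m n t k).support ∧
      (∀ E ∈ (DeltaMain 𝔽 m n t k).support, E ≠ D → monLT E D) ∧
      ∀ v : Fin m × Fin n, D v ≤ t - k) ∧
    DeltaMain 𝔽 m n t k ∉
      Ideal.span {g : MvPolynomial (Fin m × Fin n) 𝔽 |
        ∃ v : Fin m × Fin n, g = MvPolynomial.X v ^ (t - k + 1)} := by
  have hkt : k < t := by omega
  have hle : uInt t m n k ≤ (t : ℤ) - k := (minCond_iff hkt htm (htm.trans hmn)).mp hCk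
  have hgt (hk0 : 0 < k) : (k : ℤ) - t < uInt t m n k := by
    have h := hleast (k - 1) (by omega)
    rw [minCond_iff (by omega) htm (htm.trans hmn), not_le, uInt_pred hk0,
      Nat.cast_pred hk0] at h
    linarith
  have hΔ := (monic_DeltaMain (𝔽 := 𝔽) (t := t) (k := k) hmn (by omega)).ne_zero
  have hD := (lexOrder m n).degree_mem_support hΔ
  have hbound := degree_DeltaMain_apply_le (𝔽 := 𝔽) hkt htm hmn hle hgt
  refine ⟨⟨_, hD, fun E hE hne => lexOrder_lt_iff.mp ?_, hbound⟩,
    notMem_span_X_pow hD fun v => Nat.lt_succ_of_le (hbound v)⟩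
  exact ((lexOrder m n).le_degree hE).lt_of_ne fun h => hne ((lexOrder m n).toSyn.injective h)

/-- Let `k` be the least integer in `[0, t-1]` with
`(m-k)(n-k)/(t-k) ≤ (m-k-1)(n-k-1)/(t-k-1)` (division by zero read as infinity), and let
`Δ` be as constructed above.  In the lexicographical term order with
`x_{11} > x_{12} > ⋯ > x_{mn}`, every variable occurs in the initial monomial of `Δ` with
exponent at most `t-k`; consequently `Δ ∉ 𝔪^{[t-k+1]}`, the ideal generated by the
`(t-k+1)`-st powers of the variables. -/
theorem Delta_not_mem_bracket (p : ℕ) (hp : p.Prime)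
    (𝔽 : Type*) [Field 𝔽] [CharP 𝔽 p]
    (m n t : ℕ) (ht : 0 < t) (htm : t ≤ m) (hmn : m ≤ n)
    (k : ℕ) (hk : k ≤ t - 1) (hCk : minCond t m n k)
    (hleast : ∀ j : ℕ, j < k → ¬ minCond t m n j) :
    (∃ D : (Fin m × Fin n) →₀ ℕ, D ∈ (DeltaMain 𝔽 m n t k).support ∧
      (∀ E ∈ (DeltaMain 𝔽 m n t k).support, E ≠ D → monLT E D) ∧
      ∀ v : Fin m × Fin n, D v ≤ t - k) ∧
    DeltaMain 𝔽 m n t k ∉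
      Ideal.span {g : MvPolynomial (Fin m × Fin n) 𝔽 |
        ∃ v : Fin m × Fin n, g = MvPolynomial.X v ^ (t - k + 1)} :=
  Delta_not_mem_bracket_general 𝔽 m n t ht htm hmn k hk hCk hleast
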